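/- arXiv:1004.1003 — 3 statements merged into one kernel-verified Lean document; each statement's English description precedes it below -/
import Mathlib

section
/- Fix a matrix Y ∈ {±1}^{N×M}, a parameter δ > 0, and positive integers g_u, g_v. Let f(N, M, g_u, g_v) denote the number of equivalence classes of matrices in χ_{g_u,g_v} under entrywise sign pattern (two matrices are equivalent if every entry of one has the same sign, in {−1, 0, +1}, as the corresponding entry of the other). Then, with probability at least 1 − δ over the choice of a subset O of [N]×[M] chosen uniformly at random among all subsets of a fixed size |O|, it holds that for every X ∈ χ_{g_u,g_v}: D(X,Y) < D_O(X,Y) + sqrt( (log f(N, M, g_u, g_v) − log δ) / (2·|O|) ). -/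
/-- Zero-one sign-agreement distortion: `d(x,y) = 1` if `x·y ≤ 0`, else `0`. -/
noncomputable def d01 (x y : ℝ) : ℝ := if x * y ≤ 0 then 1 else 0

/-- Average distortion over the whole `N × M` matrix. -/
noncomputable def Davg {N M : ℕ} (X Y : Matrix (Fin N) (Fin M) ℝ) : ℝ :=
  (∑ p : Fin N × Fin M, d01 (X p.1 p.2) (Y p.1 p.2)) / (N * M)

/-- Average distortion over the observed set `O`. -/
noncomputable def Dobs {N M : ℕ} (O : Finset (Fin N × Fin M))
    (X Y : Matrix (Fin N) (Fin M) ℝ) : ℝ :=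
  (∑ p ∈ O, d01 (X p.1 p.2) (Y p.1 p.2)) / O.card

/-- The tri-factorized class `χ_{gu,gv}`. -/
def chi (N M gu gv : ℕ) : Set (Matrix (Fin N) (Fin M) ℝ) :=
  {X | ∃ (U : Matrix (Fin gu) (Fin N) ℝ) (W : Matrix (Fin gu) (Fin gv) ℝ)
      (V : Matrix (Fin gv) (Fin M) ℝ),
    (∀ i j, U i j ∈ Set.Icc (0 : ℝ) 1) ∧
    (∀ i j, W i j = 1 ∨ W i j = -1) ∧
    (∀ i j, V i j ∈ Set.Icc (0 : ℝ) 1) ∧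
    X = U.transpose * W * V}

/-- The number of sign-pattern equivalence classes of matrices in `χ_{gu,gv}`:
the cardinality of the set of entrywise sign patterns (with values in {-1,0,1})
realized by matrices of the class. -/
noncomputable def numSignClasses (N M gu gv : ℕ) : ℕ :=
  Set.ncard ((fun X : Matrix (Fin N) (Fin M) ℝ =>
    fun p : Fin N × Fin M => Real.sign (X p.1 p.2)) '' chi N M gu gv)

open Finset unitInterval ProbabilityTheory MeasureTheory

/-!
For a fixed matrix `X`, `D(X,Y) - D_O(X,Y)` is the deviation of the empirical frequency of sign
agreements on a uniformly random `k`-subset `O` from its mean, i.e. a tail of a hypergeometric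
distribution. Hoeffding's comparison with sampling with replacement (the factorial moments of the
hypergeometric law are dominated by the binomial ones) together with Hoeffding's lemma for a
Bernoulli variable bounds this tail by `exp (-2 k ε²)`. The event depends on `X` only through
its sign pattern, so a union bound over the `f` sign patterns of the class gives the claim with
`f exp (-2 k ε²) = δ`.
-/

theorem one_sub_add_mul_exp_le_exp {p : ℝ} (hp : p ∈ I) (t : ℝ) :
    1 - p + p * Real.exp t ≤ Real.exp (p * t + t ^ 2 / 8) := by
  have hmean : ∫ x, x ∂Ber((1 : ℝ), 0, ⟨p, hp⟩) = p := by
    simp [integral_bernoulliMeasure]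
  have hsupport : ∀ᵐ x ∂Ber((1 : ℝ), 0, ⟨p, hp⟩), x ∈ Set.Icc (0 : ℝ) 1 := by
    rw [ae_iff]
    exact bernoulliMeasure_apply_of_notMem_of_notMem _ measurableSet_Icc.compl
      (by simp) (by simp)
  have h := (hasSubgaussianMGF_of_mem_Icc aemeasurable_id hsupport).mgf_le t
  simp only [mgf, id, hmean, integral_bernoulliMeasure] at h
  norm_num at h
  calc 1 - p + p * Real.exp t
      = (p * Real.exp (t * (1 - p)) + (1 - p) * Real.exp (-(t * p))) * Real.exp (p * t) := by
        rw [add_mul, mul_assoc, mul_assoc, ← Real.exp_add, ← Real.exp_add,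
          show t * (1 - p) + p * t = t by ring, show -(t * p) + p * t = 0 by ring, Real.exp_zero]
        ring
    _ ≤ Real.exp (1 / 4 * t ^ 2 / 2) * Real.exp (p * t) := by gcongr
    _ = Real.exp (p * t + t ^ 2 / 8) := by rw [← Real.exp_add]; ring_nf

theorem Nat.descFactorial_mul_pow_le {b n : ℕ} (h : b ≤ n) :
    ∀ i, b.descFactorial i * n ^ i ≤ n.descFactorial i * b ^ i
  | 0 => by simp
  | i + 1 => by
    have hstep : (b - i) * n ≤ (n - i) * b := by
      rw [Nat.sub_mul, Nat.sub_mul, mul_comm b n]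
      exact Nat.sub_le_sub_left (Nat.mul_le_mul_left i h) _
    calc b.descFactorial (i + 1) * n ^ (i + 1)
        = (b.descFactorial i * n ^ i) * ((b - i) * n) := by
          rw [Nat.descFactorial_succ, pow_succ]; ring
      _ ≤ (n.descFactorial i * b ^ i) * ((n - i) * b) :=
          Nat.mul_le_mul (Nat.descFactorial_mul_pow_le h i) hstep
      _ = n.descFactorial (i + 1) * b ^ (i + 1) := by
          rw [Nat.descFactorial_succ, pow_succ]; ring

theorem Nat.choose_mul_pow_le {b n : ℕ} (h : b ≤ n) (i : ℕ) :
    b.choose i * n ^ i ≤ n.choose i * b ^ i := by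
  have := Nat.descFactorial_mul_pow_le h i
  rw [Nat.descFactorial_eq_factorial_mul_choose, Nat.descFactorial_eq_factorial_mul_choose,
    mul_assoc, mul_assoc] at this
  exact Nat.le_of_mul_le_mul_left this (Nat.factorial_pos i)

theorem one_add_pow_eq_sum_range {R : Type*} [CommSemiring R] (y : R) {a k : ℕ} (hak : a ≤ k) :
    (1 + y) ^ a = ∑ i ∈ range (k + 1), (a.choose i : R) * y ^ i := by
  rw [add_comm, add_pow]
  refine (sum_subset (range_subset_range.mpr (Nat.succ_le_succ hak)) fun i _ hi => ?_).trans
    (sum_congr rfl fun i _ => by ring)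
  rw [Nat.choose_eq_zero_of_lt (by simpa using hi)]
  simp

section Sampling

variable {α : Type*} [DecidableEq α] {B t : Finset α}

theorem Finset.sum_powersetCard_choose_card_inter (hB : B ⊆ t) {i k : ℕ} (hik : i ≤ k) :
    ∑ O ∈ t.powersetCard k, (#(B ∩ O)).choose i = (#B).choose i * (#t - i).choose (k - i) := by
  have hchoose (O : Finset α) :
      (#(B ∩ O)).choose i = #((B.powersetCard i).bipartiteBelow (· ⊆ ·) O) := by
    rw [← card_powersetCard]
    congr 1
    ext T
    simp only [mem_powersetCard, mem_bipartiteBelow, subset_inter_iff]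
    tauto
  have hsupersets : ∀ T ∈ B.powersetCard i,
      #((t.powersetCard k).bipartiteAbove (· ⊆ ·) T) = (#t - i).choose (k - i) := by
    intro T hT
    rw [mem_powersetCard] at hT
    rw [bipartiteAbove, card_filter_powersetCard_subset T t k (hT.1.trans hB) (hT.2 ▸ hik), hT.2]
  simp only [hchoose]
  rw [← sum_card_bipartiteAbove_eq_sum_card_bipartiteBelow, sum_congr rfl hsupersets, sum_const,
    card_powersetCard, smul_eq_mul]

/-- The moment generating function of the hypergeometric law is at most the binomial one. -/
theorem Finset.pow_card_mul_sum_powersetCard_one_add_pow_le (hB : B ⊆ t) {y : ℝ} (hy : 0 ≤ y)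
    (k : ℕ) :
    (#t : ℝ) ^ k * ∑ O ∈ t.powersetCard k, (1 + y) ^ #(B ∩ O)
      ≤ (#t).choose k * (#B * y + #t) ^ k := by
  have hexpand : ∀ O ∈ t.powersetCard k,
      (1 + y) ^ #(B ∩ O) = ∑ i ∈ range (k + 1), ((#(B ∩ O)).choose i : ℝ) * y ^ i := by
    intro O hO
    refine one_add_pow_eq_sum_range y ?_
    exact (card_le_card inter_subset_right).trans (mem_powersetCard.mp hO).2.le
  rw [sum_congr rfl hexpand, sum_comm, add_pow, mul_sum, mul_sum]
  refine sum_le_sum fun i hi => ?_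
  have hik : i ≤ k := Nat.lt_succ_iff.mp (mem_range.mp hi)
  have hcoeff : (#B).choose i * (#t - i).choose (k - i) * #t ^ i
      ≤ (#t).choose k * k.choose i * #B ^ i := by
    rw [Nat.choose_mul hik, mul_right_comm, mul_right_comm ((#t).choose i)]
    exact Nat.mul_le_mul_right _ (Nat.choose_mul_pow_le (card_le_card hB) i)
  rw [← sum_mul, ← Nat.cast_sum, sum_powersetCard_choose_card_inter hB hik]
  calc (#t : ℝ) ^ k * (((#B).choose i * (#t - i).choose (k - i) : ℕ) * y ^ i)
      = (((#B).choose i * (#t - i).choose (k - i) * #t ^ i : ℕ) : ℝ) * (y ^ i * #t ^ (k - i)) := by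
        rw [← pow_mul_pow_sub _ hik]; push_cast; ring
    _ ≤ (((#t).choose k * k.choose i * #B ^ i : ℕ) : ℝ) * (y ^ i * #t ^ (k - i)) := by
        gcongr
    _ = (#t).choose k * ((#B * y) ^ i * #t ^ (k - i) * k.choose i) := by push_cast; ring

theorem Finset.card_powersetCard_filter_card_inter_ge_le (ht : t.Nonempty) (hB : B ⊆ t)
    {ε : ℝ} (hε : 0 ≤ ε) (k : ℕ) :
    (#{O ∈ t.powersetCard k | k * (#B / #t + ε) ≤ #(B ∩ O)} : ℝ)
      ≤ (#t).choose k * Real.exp (-2 * k * ε ^ 2) := by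
  set p : ℝ := #B / #t
  -- `l = 4 ε` optimizes the Chernoff bound `exp (k l² / 8 - k l ε)`.
  set l : ℝ := 4 * ε
  have htpos : (0 : ℝ) < #t := by exact_mod_cast ht.card_pos
  have hp : p ∈ I := ⟨by positivity, div_le_one_of_le₀ (by exact_mod_cast card_le_card hB) htpos.le⟩
  have hy : 0 ≤ Real.exp l - 1 := sub_nonneg.mpr (Real.one_le_exp (by positivity))
  have hmarkov : #{O ∈ t.powersetCard k | k * (p + ε) ≤ #(B ∩ O)} • Real.exp (l * (k * (p + ε)))
      ≤ ∑ O ∈ t.powersetCard k, (1 + (Real.exp l - 1)) ^ #(B ∩ O) := by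
    refine (card_nsmul_le_sum _ _ _ fun O hO => ?_).trans
      (sum_le_sum_of_subset_of_nonneg (filter_subset _ _) fun _ _ _ => by positivity)
    rw [add_sub_cancel, ← Real.exp_nat_mul, mul_comm _ l]
    exact Real.exp_le_exp.mpr (mul_le_mul_of_nonneg_left (mem_filter.mp hO).2 (by positivity))
  have hmgf : ∑ O ∈ t.powersetCard k, (1 + (Real.exp l - 1)) ^ #(B ∩ O)
      ≤ (#t).choose k * (1 + p * (Real.exp l - 1)) ^ k := by
    have h := pow_card_mul_sum_powersetCard_one_add_pow_le hB hy k
    rw [show (#B * (Real.exp l - 1) + #t : ℝ) = #t * (1 + p * (Real.exp l - 1)) by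
      simp only [p]; field_simp; ring, mul_pow, mul_left_comm] at h
    exact le_of_mul_le_mul_left h (by positivity)
  have hhoeffding : (1 + p * (Real.exp l - 1)) ^ k ≤ Real.exp (k * (p * l + l ^ 2 / 8)) := by
    rw [Real.exp_nat_mul]
    gcongr
    exact (le_of_eq (by ring)).trans (one_sub_add_mul_exp_le_exp hp l)
  rw [nsmul_eq_mul, ← le_div_iff₀ (Real.exp_pos _)] at hmarkov
  calc _ ≤ (#t).choose k * Real.exp (k * (p * l + l ^ 2 / 8)) / Real.exp (l * (k * (p + ε))) :=
        hmarkov.trans (div_le_div_of_nonneg_right (hmgf.trans (by gcongr)) (by positivity))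
    _ = (#t).choose k * Real.exp (-2 * k * ε ^ 2) := by
        rw [mul_div_assoc, ← Real.exp_sub]
        congr 2
        simp only [l]
        ring

theorem Finset.card_powersetCard_filter_exists_card_inter_ge_le {ι : Type*} (s : Finset ι)
    (G : ι → Finset α) (ht : t.Nonempty) (hG : ∀ i ∈ s, G i ⊆ t) {ε : ℝ} (hε : 0 ≤ ε) (k : ℕ) :
    (#{O ∈ t.powersetCard k | ∃ i ∈ s, k * (#(G i) / #t + ε) ≤ #(G i ∩ O)} : ℝ)
      ≤ #s * ((#t).choose k * Real.exp (-2 * k * ε ^ 2)) := by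
  have hsub : {O ∈ t.powersetCard k | ∃ i ∈ s, k * (#(G i) / #t + ε) ≤ #(G i ∩ O)}
      ⊆ s.biUnion fun i => {O ∈ t.powersetCard k | k * (#(G i) / #t + ε) ≤ #(G i ∩ O)} := by
    intro O hO
    obtain ⟨hOk, i, hi, hOi⟩ := mem_filter.mp hO
    exact mem_biUnion.mpr ⟨i, hi, mem_filter.mpr ⟨hOk, hOi⟩⟩
  calc _ ≤ (#(s.biUnion fun i =>
          {O ∈ t.powersetCard k | k * (#(G i) / #t + ε) ≤ #(G i ∩ O)}) : ℝ) := by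
        exact_mod_cast card_le_card hsub
    _ ≤ ∑ i ∈ s, (#{O ∈ t.powersetCard k | k * (#(G i) / #t + ε) ≤ #(G i ∩ O)} : ℝ) := by
        exact_mod_cast card_biUnion_le
    _ ≤ ∑ i ∈ s, ((#t).choose k * Real.exp (-2 * k * ε ^ 2)) :=
        sum_le_sum fun i hi => card_powersetCard_filter_card_inter_ge_le ht (hG i hi) hε k
    _ = _ := by rw [sum_const, nsmul_eq_mul]

end Sampling

theorem Finset.one_sub_le_card_filter_div_card {β : Type*} {s : Finset β} (hs : s.Nonempty)
    (P : β → Prop) [DecidablePred P] {δ : ℝ} (hbad : (#{x ∈ s | ¬ P x} : ℝ) ≤ δ * #s) :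
    1 - δ ≤ #{x ∈ s | P x} / #s := by
  have hsplit : (#{x ∈ s | P x} : ℝ) + #{x ∈ s | ¬ P x} = #s := by
    exact_mod_cast card_filter_add_card_filter_not P
  rw [le_div_iff₀ (by exact_mod_cast hs.card_pos)]
  linarith

theorem natCast_mul_exp_log_sub_log_le (f : ℕ) {δ : ℝ} (hδ : 0 < δ) :
    f * Real.exp (Real.log δ - Real.log f) ≤ δ := by
  rcases Nat.eq_zero_or_pos f with hf | hf
  · simp [hf, hδ.le]
  · rw [Real.exp_sub, Real.exp_log hδ, Real.exp_log (by exact_mod_cast hf)]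
    exact (mul_div_cancel₀ δ (by positivity)).le

theorem Real.sign_mul_pos_iff {x y : ℝ} : 0 < Real.sign x * y ↔ 0 < x * y := by
  rcases lt_trichotomy x 0 with hx | rfl | hx
  · rw [Real.sign_of_neg hx]
    constructor <;> intro h <;> nlinarith
  · simp
  · rw [Real.sign_of_pos hx]
    constructor <;> intro h <;> nlinarith

theorem Set.finite_image_sign {β γ : Type*} [Finite γ] (S : Set β) (F : β → γ → ℝ) :
    ((fun x p => Real.sign (F x p)) '' S).Finite := by
  refine (Set.Finite.pi fun _ => Set.toFinite ({-1, 0, 1} : Set ℝ)).subset ?_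
  rintro _ ⟨x, -, rfl⟩ p -
  rcases Real.sign_apply_eq (F x p) with h | h | h <;> simp [h]

noncomputable def agreement {α : Type*} [Fintype α] (X Y : α → ℝ) : Finset α :=
  {p | 0 < X p * Y p}

theorem agreement_sign {α : Type*} [Fintype α] (X Y : α → ℝ) :
    agreement (fun p => Real.sign (X p)) Y = agreement X Y := by
  ext p
  simp [agreement, Real.sign_mul_pos_iff]

section Distortion

variable {N M : ℕ}

theorem sum_d01_add_card_agreement_inter (X Y : Matrix (Fin N) (Fin M) ℝ)
    (s : Finset (Fin N × Fin M)) :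
    ∑ p ∈ s, d01 (X p.1 p.2) (Y p.1 p.2)
      + #(agreement (Function.uncurry X) (Function.uncurry Y) ∩ s) = #s := by
  have hagree : agreement (Function.uncurry X) (Function.uncurry Y) ∩ s
      = {p ∈ s | ¬ X p.1 p.2 * Y p.1 p.2 ≤ 0} := by
    ext p
    simp only [agreement, mem_inter, mem_filter, mem_univ, true_and, not_le]
    exact and_comm
  simp only [d01, sum_boole, hagree]
  exact_mod_cast card_filter_add_card_filter_not _

theorem Davg_eq_one_sub_card_agreement_div (X Y : Matrix (Fin N) (Fin M) ℝ) (hNM : 0 < N * M) :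
    Davg X Y = 1 - #(agreement (Function.uncurry X) (Function.uncurry Y)) / (N * M) := by
  have h := sum_d01_add_card_agreement_inter X Y univ
  rw [inter_univ, card_univ, Fintype.card_prod, Fintype.card_fin, Fintype.card_fin] at h
  have hpos : (0 : ℝ) < N * M := by exact_mod_cast hNM
  rw [Davg, eq_sub_iff_add_eq, ← add_div, div_eq_one_iff_eq hpos.ne']
  exact_mod_cast h

theorem Dobs_eq_one_sub_card_agreement_inter_div (X Y : Matrix (Fin N) (Fin M) ℝ)
    {O : Finset (Fin N × Fin M)} (hO : O.Nonempty) :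
    Dobs O X Y = 1 - #(agreement (Function.uncurry X) (Function.uncurry Y) ∩ O) / #O := by
  have hpos : (0 : ℝ) < #O := by exact_mod_cast hO.card_pos
  rw [Dobs, eq_sub_iff_add_eq, ← add_div, div_eq_one_iff_eq hpos.ne']
  exact sum_d01_add_card_agreement_inter X Y O

theorem mul_card_agreement_div_add_le_card_inter {X Y : Matrix (Fin N) (Fin M) ℝ}
    {O : Finset (Fin N × Fin M)} (hO : O.Nonempty) (hNM : 0 < N * M) {ε : ℝ}
    (h : Dobs O X Y + ε ≤ Davg X Y) :
    #O * (#(agreement (Function.uncurry X) (Function.uncurry Y)) / (N * M) + ε)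
      ≤ #(agreement (Function.uncurry X) (Function.uncurry Y) ∩ O) := by
  rw [Davg_eq_one_sub_card_agreement_div X Y hNM,
    Dobs_eq_one_sub_card_agreement_inter_div X Y hO] at h
  rw [← le_div_iff₀' (by exact_mod_cast hO.card_pos)]
  linarith

open scoped Classical in
theorem card_powersetCard_filter_not_forall_Davg_lt_le (C : Set (Matrix (Fin N) (Fin M) ℝ))
    (Y : Matrix (Fin N) (Fin M) ℝ) {ε : ℝ} (hε : 0 ≤ ε) {k : ℕ} (hk0 : 0 < k) (hk : k ≤ N * M) :
    (#{O ∈ (univ : Finset (Fin N × Fin M)).powersetCard k |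
        ¬ ∀ X ∈ C, Davg X Y < Dobs O X Y + ε} : ℝ)
      ≤ ((fun X : Matrix (Fin N) (Fin M) ℝ => fun p : Fin N × Fin M => Real.sign (X p.1 p.2)) ''
          C).ncard * ((N * M).choose k * Real.exp (-2 * k * ε ^ 2)) := by
  have hcard : #(univ : Finset (Fin N × Fin M)) = N * M := by simp
  have hNM : 0 < N * M := hk0.trans_le hk
  set patterns := (Set.finite_image_sign C
    (fun (X : Matrix (Fin N) (Fin M) ℝ) (p : Fin N × Fin M) => X p.1 p.2)).toFinset
  have hbad : {O ∈ (univ : Finset (Fin N × Fin M)).powersetCard k |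
        ¬ ∀ X ∈ C, Davg X Y < Dobs O X Y + ε}
      ⊆ {O ∈ (univ : Finset (Fin N × Fin M)).powersetCard k | ∃ s ∈ patterns,
          k * (#(agreement s (Function.uncurry Y)) / #(univ : Finset (Fin N × Fin M)) + ε)
            ≤ #(agreement s (Function.uncurry Y) ∩ O)} := by
    refine monotone_filter_right _ fun O hO hbad => ?_
    push Not at hbad
    obtain ⟨X, hX, hXO⟩ := hbad
    have hOk := (mem_powersetCard.mp hO).2
    refine ⟨_, (Set.Finite.mem_toFinset _).mpr ⟨X, hX, rfl⟩, ?_⟩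
    rw [agreement_sign, hcard, ← hOk]
    push_cast
    exact mul_card_agreement_div_add_le_card_inter (card_pos.mp (hOk ▸ hk0)) hNM hXO
  rw [Set.ncard_eq_toFinset_card _ (Set.finite_image_sign _ _), ← hcard]
  calc _ ≤ _ := by exact_mod_cast card_le_card hbad
    _ ≤ _ := card_powersetCard_filter_exists_card_inter_ge_le _ _ (card_pos.mp (hcard ▸ hNM))
        (fun _ _ => subset_univ _) hε k

end Distortion

open scoped Classical in
theorem stmt1_general {N M gu gv : ℕ}
    (Y : Matrix (Fin N) (Fin M) ℝ)
    (δ : ℝ) (hδ : 0 < δ) (k : ℕ) (hk0 : 0 < k) (hk : k ≤ N * M) :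
    1 - δ ≤
      (((Finset.powersetCard k (Finset.univ : Finset (Fin N × Fin M))).filter
          (fun O : Finset (Fin N × Fin M) =>
            ∀ X ∈ chi N M gu gv,
              Davg X Y < Dobs O X Y +
                Real.sqrt ((Real.log (numSignClasses N M gu gv) - Real.log δ)
                  / (2 * k)))).card : ℝ) /
        ((Finset.powersetCard k (Finset.univ : Finset (Fin N × Fin M))).card : ℝ) := by
  set f := numSignClasses N M gu gv
  set ε := Real.sqrt ((Real.log f - Real.log δ) / (2 * k))
  have hcard : #(univ : Finset (Fin N × Fin M)) = N * M := by simp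
  refine one_sub_le_card_filter_div_card (powersetCard_nonempty.mpr (hcard ▸ hk)) _ ?_
  rcases le_or_gt 1 δ with hδ1 | hδ1
  · calc _ ≤ (#(univ.powersetCard k) : ℝ) := by exact_mod_cast card_filter_le _ _
      _ ≤ _ := le_mul_of_one_le_left (by positivity) hδ1
  have hε : -2 * k * ε ^ 2 = Real.log δ - Real.log f := by
    have hlog : Real.log δ < Real.log f :=
      (Real.log_neg hδ hδ1).trans_le (Real.log_natCast_nonneg f)
    rw [Real.sq_sqrt (div_nonneg (by linarith) (by positivity))]
    field_simp
    ring
  calc _ ≤ f * ((N * M).choose k * Real.exp (-2 * k * ε ^ 2)) :=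
        card_powersetCard_filter_not_forall_Davg_lt_le _ Y (Real.sqrt_nonneg _) hk0 hk
    _ ≤ δ * #(univ.powersetCard k) := by
        rw [card_powersetCard, hcard, hε, mul_left_comm, mul_comm δ]
        exact mul_le_mul_of_nonneg_left (natCast_mul_exp_log_sub_log_le f hδ) (by positivity)

open scoped Classical in
/-- Union bound step: with probability at least `1 - δ` over a uniformly random
subset `O` of size `k`, every `X ∈ χ_{gu,gv}` satisfies
`D(X,Y) < D_O(X,Y) + sqrt((log f(N,M,gu,gv) - log δ)/(2|O|))`. -/
theorem stmt1 {N M gu gv : ℕ} (hgu : 0 < gu) (hgv : 0 < gv)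
    (Y : Matrix (Fin N) (Fin M) ℝ) (hY : ∀ n m, Y n m = 1 ∨ Y n m = -1)
    (δ : ℝ) (hδ : 0 < δ) (k : ℕ) (hk0 : 0 < k) (hk : k ≤ N * M) :
    1 - δ ≤
      (((Finset.powersetCard k (Finset.univ : Finset (Fin N × Fin M))).filter
          (fun O : Finset (Fin N × Fin M) =>
            ∀ X ∈ chi N M gu gv,
              Davg X Y < Dobs O X Y +
                Real.sqrt ((Real.log (numSignClasses N M gu gv) - Real.log δ)
                  / (2 * k)))).card : ℝ) /
        ((Finset.powersetCard k (Finset.univ : Finset (Fin N × Fin M))).card : ℝ) :=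
  stmt1_general Y δ hδ k hk0 hk
end

section
/- Let n, A, d be positive integers with A ≤ n and d ≥ 1, and let b_1, …, b_n be real numbers with 1 ≤ b_s ≤ d for all s. Let b̄ = (1/n)·Σ_{s=1}^n b_s and assume b̄ ≥ (d−1)·A/n. Then Σ_{S ⊆ [n], |S| = A} Π_{s∈S} b_s ≥ C(n, A) · ( b̄ − (d−1)·A/n )^A, where C(n, A) is the binomial coefficient. -/
/-!
Write `e_k` for the `k`-th elementary symmetric sum of the `b_s`. Counting pairs `(T, t)` with
`|T| = k` and `t ∉ T` gives `(k + 1) e_{k+1} = ∑_{|T| = k} (∑_{t ∉ T} b_t) ∏_{s ∈ T} b_s`.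
With `r = b̄ - (d - 1) A / n`, every inner sum over the `n - k` indices outside `T` is at least
`(n - k) r` when `k ≤ A`: if `r ≤ 1` because each `b_t ≥ 1`, and if `r > 1` because it equals
`n b̄ - ∑_{s ∈ T} b_s ≥ n b̄ - k d ≥ (n - k) r`. Hence `(k + 1) e_{k+1} ≥ (n - k) r e_k` for `k < A`, and
iterating from `e_0 = 1` gives `e_A ≥ C(n, A) r^A`, since `(k + 1) C(n, k + 1) = (n - k) C(n, k)`.
-/

open Finset

section Semiring

variable {ι R : Type*} [Fintype ι] [DecidableEq ι] [CommSemiring R]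

theorem sum_powersetCard_sum_compl_mul_prod (f : ι → R) (k : ℕ) :
    ∑ T ∈ powersetCard k univ, (∑ t ∈ Tᶜ, f t) * ∏ i ∈ T, f i =
      (k + 1) * ∑ S ∈ powersetCard (k + 1) univ, ∏ i ∈ S, f i := by
  have hS : ∀ S ∈ powersetCard (k + 1) (univ : Finset ι),
      ((k : R) + 1) * ∏ i ∈ S, f i = ∑ _t ∈ S, ∏ i ∈ S, f i := by
    intro S hS
    rw [sum_const, (mem_powersetCard.1 hS).2, nsmul_eq_mul, Nat.cast_succ]
  simp_rw [sum_mul, mul_sum, sum_congr rfl hS, sum_sigma']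
  -- `(T, t)` with `t ∉ T` corresponds to `(S, t)` with `t ∈ S` via `S = insert t T`
  refine sum_nbij' (fun x => ⟨insert x.2 x.1, x.2⟩) (fun y => ⟨y.1.erase y.2, y.2⟩)
    ?_ ?_ ?_ ?_ ?_
  · rintro ⟨T, t⟩ h
    simp only [mem_sigma, mem_powersetCard, subset_univ, true_and, mem_compl] at h ⊢
    exact ⟨by rw [card_insert_of_notMem h.2, h.1], mem_insert_self t T⟩
  · rintro ⟨S, t⟩ h
    simp only [mem_sigma, mem_powersetCard, subset_univ, true_and, mem_compl] at h ⊢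
    exact ⟨by rw [card_erase_of_mem h.2, h.1, Nat.add_sub_cancel], notMem_erase t S⟩
  · rintro ⟨T, t⟩ h
    simp_all
  · rintro ⟨S, t⟩ h
    simp_all
  · rintro ⟨T, t⟩ h
    simp_all [prod_insert]

variable [PartialOrder R] [IsOrderedRing R]

theorem mul_sum_powersetCard_prod_le {f : ι → R} (hf : 0 ≤ f) {k : ℕ} {c : R}
    (hc : ∀ T ∈ powersetCard k univ, c ≤ ∑ t ∈ Tᶜ, f t) :
    c * ∑ T ∈ powersetCard k univ, ∏ i ∈ T, f i ≤
      (k + 1) * ∑ S ∈ powersetCard (k + 1) univ, ∏ i ∈ S, f i := by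
  rw [← sum_powersetCard_sum_compl_mul_prod, mul_sum]
  exact sum_le_sum fun T hT => mul_le_mul_of_nonneg_right (hc T hT) (prod_nonneg fun i _ => hf i)

end Semiring

theorem choose_mul_pow_le_of_mul_le_succ_mul {K : Type*} [CommSemiring K] [LinearOrder K]
    [IsStrictOrderedRing K] {e : ℕ → K} {n A : ℕ} {r : K} (hr : 0 ≤ r) (he : 1 ≤ e 0)
    (hstep : ∀ k < A, ((n - k : ℕ) : K) * r * e k ≤ (k + 1) * e (k + 1)) :
    (n.choose A : K) * r ^ A ≤ e A := by
  induction A with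
  | zero => simpa using he
  | succ k ih =>
    refine le_of_mul_le_mul_left ?_ (by positivity : (0 : K) < k + 1)
    calc ((k : K) + 1) * ((n.choose (k + 1) : K) * r ^ (k + 1))
        = ((n - k : ℕ) : K) * r * ((n.choose k : K) * r ^ k) := by
          rw [← Nat.cast_succ, ← mul_assoc, mul_comm _ (n.choose (k + 1) : K), ← Nat.cast_mul,
            Nat.choose_succ_right_eq, Nat.cast_mul, pow_succ]
          ring
      _ ≤ ((n - k : ℕ) : K) * r * e k :=
          mul_le_mul_of_nonneg_left (ih fun j hj => hstep j (hj.trans k.lt_succ_self))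
            (by positivity)
      _ ≤ (k + 1) * e (k + 1) := hstep k k.lt_succ_self

theorem card_compl_mul_le_sum_compl {ι : Type*} [Fintype ι] [DecidableEq ι] {b : ι → ℝ}
    {d r : ℝ} {A : ℕ} (hb : ∀ i, 1 ≤ b i ∧ b i ≤ d) (hd : 1 ≤ d)
    (hr : r ≤ (∑ i, b i - (d - 1) * A) / Fintype.card ι) {T : Finset ι} (hT : #T ≤ A) :
    (#Tᶜ : ℝ) * r ≤ ∑ t ∈ Tᶜ, b t := by
  rcases le_or_gt r 1 with hr1 | hr1
  · calc (#Tᶜ : ℝ) * r ≤ #Tᶜ * 1 := by gcongr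
      _ = ∑ _t ∈ Tᶜ, (1 : ℝ) := by simp
      _ ≤ ∑ t ∈ Tᶜ, b t := sum_le_sum fun t _ => (hb t).1
  · have hn : (0 : ℝ) < Fintype.card ι := by
      by_contra! h
      rw [le_antisymm h (Nat.cast_nonneg _), div_zero] at hr
      linarith
    rw [le_div_iff₀ hn] at hr
    have hsumT : ∑ t ∈ T, b t ≤ #T * d := by
      simpa using sum_le_sum fun t (_ : t ∈ T) => (hb t).2
    have hTA : (#T : ℝ) ≤ A := by exact_mod_cast hT
    rw [card_compl, Nat.cast_sub (card_le_univ T), eq_sub_of_add_eq (sum_compl_add_sum T b)]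
    linarith [mul_le_mul_of_nonneg_left hr1.le (Nat.cast_nonneg (α := ℝ) #T),
      mul_le_mul_of_nonneg_left hTA (sub_nonneg.2 hd)]

theorem stmt6_general {n A d : ℕ} (hd : 1 ≤ d)
    (b : Fin n → ℝ) (hb : ∀ s, 1 ≤ b s ∧ b s ≤ (d : ℝ))
    (bbar : ℝ) (hbbar : bbar = (∑ s, b s) / n)
    (hcond : ((d : ℝ) - 1) * A / n ≤ bbar) :
    (n.choose A : ℝ) * (bbar - ((d : ℝ) - 1) * A / n) ^ A ≤
      ∑ S ∈ Finset.powersetCard A (Finset.univ : Finset (Fin n)), ∏ s ∈ S, b s := by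
  have hr : bbar - ((d : ℝ) - 1) * A / n = (∑ s, b s - (d - 1) * A) / Fintype.card (Fin n) := by
    rw [hbbar, Fintype.card_fin, sub_div]
  refine choose_mul_pow_le_of_mul_le_succ_mul
    (e := fun k => ∑ S ∈ powersetCard k univ, ∏ s ∈ S, b s) (sub_nonneg.2 hcond) ?_ fun k hk => ?_
  · simp
  refine mul_sum_powersetCard_prod_le (fun i => zero_le_one.trans (hb i).1) fun T hT => ?_
  obtain ⟨-, hTk⟩ := mem_powersetCard.1 hT
  have := card_compl_mul_le_sum_compl hb (by exact_mod_cast hd) hr.le (hTk.trans_lt hk).le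
  rwa [card_compl, Fintype.card_fin, hTk] at this

/-- Lower bound on the `A`-th elementary symmetric polynomial of reals
`b_1, …, b_n` with `1 ≤ b_s ≤ d`: it is at least
`C(n,A) · (b̄ - (d-1)A/n)^A` where `b̄` is the mean of the `b_s`. -/
theorem stmt6 {n A d : ℕ} (hA : 0 < A) (hAn : A ≤ n) (hd : 1 ≤ d)
    (b : Fin n → ℝ) (hb : ∀ s, 1 ≤ b s ∧ b s ≤ (d : ℝ))
    (bbar : ℝ) (hbbar : bbar = (∑ s, b s) / n)
    (hcond : ((d : ℝ) - 1) * A / n ≤ bbar) :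
    (n.choose A : ℝ) * (bbar - ((d : ℝ) - 1) * A / n) ^ A ≤
      ∑ S ∈ Finset.powersetCard A (Finset.univ : Finset (Fin n)), ∏ s ∈ S, b s :=
  stmt6_general hd b hb bbar hbbar hcond
end

section
/- Let n, A, d be positive integers with A ≤ n and d ≥ 1, and let b_1, …, b_n be positive integers with 1 ≤ b_s ≤ d for all s. Let b̄ = (1/n)·Σ_{s=1}^n b_s, let T = Σ_{s=1}^n b_s, and assume A ≤ T and b̄ ≥ (d−1)·A/n. Then ( Σ_{S ⊆ [n], |S| = A} Π_{s∈S} b_s ) / C(T, A) ≥ (1 − A/n)^A · (1 − (d−1)·A/(b̄·n))^A ≥ 1 − A²/n − A²·(d−1)/(b̄·n), where C(T, A) is the binomial coefficient. -/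
/-!
Attach the `A` edges one at a time to uniformly random free stubs. If the first `k < A` edges
occupy a set `S` of `k` distinct nodes, the stubs on the other nodes number at least `n - k`
(every `b_t ≥ 1`) and at least `T - k d` (every `b_s ≤ d`), hence at least
`(n - k)(T - (d - 1) k) / n`; so the next edge hits a new node with probability at least
`c = (1 - A/n)(1 - (d - 1) A / T)`, and the probability of `A` distinct nodes is at least `c ^ A`.
Combinatorially, the double-counting identity `(k + 1) e_{k+1} = Σ_{|S| = k} (Π_S b) Σ_{t ∉ S} b_t`
for the elementary symmetric sums, set against `(k + 1) C(T, k + 1) = (T - k) C(T, k)`, gives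
`e_A ≥ c ^ A C(T, A)` by induction. The second inequality is Bernoulli's inequality for
`((1 - x)(1 - y)) ^ A` with `x = A/n`, `y = (d - 1) A / T`.
-/

open Finset

namespace Finset

variable {ι : Type*} [DecidableEq ι]

/-- Both sides count pairs `(S, t)` with `#S = k`, `t ∈ s \ S`, weighted by `Π_{S ∪ {t}} b`. -/
theorem succ_mul_sum_powersetCard_succ_prod {R : Type*} [CommSemiring R] (s : Finset ι)
    (b : ι → R) (k : ℕ) :
    ((k : R) + 1) * ∑ U ∈ s.powersetCard (k + 1), ∏ i ∈ U, b i =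
      ∑ S ∈ s.powersetCard k, (∏ i ∈ S, b i) * ∑ t ∈ s \ S, b t := by
  have hcard (U) (hU : U ∈ s.powersetCard (k + 1)) :
      ((k : R) + 1) * ∏ i ∈ U, b i = ∑ t ∈ U, ∏ i ∈ insert t (U.erase t), b i := by
    rw [sum_congr rfl fun t ht => by rw [insert_erase ht], sum_const,
      (mem_powersetCard.1 hU).2, nsmul_eq_mul]
    push_cast
    rfl
  have hinsert (S) (_ : S ∈ s.powersetCard k) :
      (∏ i ∈ S, b i) * ∑ t ∈ s \ S, b t = ∑ t ∈ s \ S, ∏ i ∈ insert t S, b i := by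
    rw [mul_sum]
    refine sum_congr rfl fun t ht => ?_
    rw [prod_insert (mem_sdiff.1 ht).2, mul_comm]
  rw [mul_sum, sum_congr rfl hcard, sum_congr rfl hinsert, sum_sigma', sum_sigma']
  refine sum_nbij' (fun x => ⟨x.1.erase x.2, x.2⟩) (fun y => ⟨insert y.2 y.1, y.2⟩)
    ?_ ?_ ?_ ?_ fun _ _ => rfl
  · rintro ⟨U, t⟩ hx
    simp only [mem_sigma, mem_powersetCard, mem_sdiff] at hx ⊢
    exact ⟨⟨(erase_subset t U).trans hx.1.1, by rw [card_erase_of_mem hx.2, hx.1.2]; rfl⟩,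
      hx.1.1 hx.2, notMem_erase t U⟩
  · rintro ⟨S, t⟩ hy
    simp only [mem_sigma, mem_powersetCard, mem_sdiff] at hy ⊢
    exact ⟨⟨insert_subset hy.2.1 hy.1.1, by rw [card_insert_of_notMem hy.2.2, hy.1.2]⟩,
      mem_insert_self t S⟩
  · rintro ⟨U, t⟩ hx
    simp only [mem_sigma] at hx
    simp [insert_erase hx.2]
  · rintro ⟨S, t⟩ hy
    simp only [mem_sigma, mem_sdiff] at hy
    simp [erase_insert hy.2.2]

end Finset

section

variable {ι : Type*} [DecidableEq ι]

theorem pow_mul_choose_le_sum_powersetCard_prod (s : Finset ι) {b : ι → ℝ} (hb : ∀ i, 0 ≤ b i)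
    {c : ℝ} (hc : 0 ≤ c) {T A : ℕ} (hAT : A ≤ T)
    (hstep : ∀ k < A, ∀ S ∈ s.powersetCard k, c * (T - k) ≤ ∑ t ∈ s \ S, b t) :
    c ^ A * T.choose A ≤ ∑ S ∈ s.powersetCard A, ∏ i ∈ S, b i := by
  induction A with
  | zero => simp
  | succ k ih =>
    have hkT : k < T := hAT
    have ih := ih hkT.le fun j hj => hstep j (hj.trans k.lt_succ_self)
    have hchoose : (T.choose (k + 1) : ℝ) * (k + 1) = T.choose k * (T - k) := by
      have h := congrArg (Nat.cast (R := ℝ)) (Nat.choose_succ_right_eq T k)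
      push_cast [Nat.cast_sub hkT.le] at h
      exact h
    have hfactor : 0 ≤ c * (T - k) :=
      mul_nonneg hc (sub_nonneg.2 (by exact_mod_cast hkT.le))
    refine le_of_mul_le_mul_left ?_ (by positivity : (0 : ℝ) < k + 1)
    calc ((k : ℝ) + 1) * (c ^ (k + 1) * T.choose (k + 1))
        = c * (T - k) * (c ^ k * T.choose k) := by
          linear_combination c ^ (k + 1) * hchoose
      _ ≤ c * (T - k) * ∑ S ∈ s.powersetCard k, ∏ i ∈ S, b i :=
        mul_le_mul_of_nonneg_left ih hfactor
      _ ≤ ∑ S ∈ s.powersetCard k, (∏ i ∈ S, b i) * ∑ t ∈ s \ S, b t := by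
        rw [mul_sum]
        refine sum_le_sum fun S hS => ?_
        rw [mul_comm]
        exact mul_le_mul_of_nonneg_left (hstep k k.lt_succ_self S hS)
          (prod_nonneg fun i _ => hb i)
      _ = ((k : ℝ) + 1) * ∑ U ∈ s.powersetCard (k + 1), ∏ i ∈ U, b i :=
        (succ_mul_sum_powersetCard_succ_prod s b k).symm

theorem card_sub_mul_sum_sub_le_card_mul_sum_sdiff {s S : Finset ι} (hS : S ⊆ s) {b : ι → ℝ}
    {d : ℝ} (hb : ∀ i ∈ s, 1 ≤ b i ∧ b i ≤ d) :
    (#s - #S) * (∑ i ∈ s, b i - (d - 1) * #S) ≤ #s * ∑ t ∈ s \ S, b t := by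
  have hσ_card : (#s : ℝ) - #S ≤ ∑ t ∈ s \ S, b t := by
    have := card_nsmul_le_sum (s \ S) b 1 fun t ht => (hb t (sdiff_subset ht)).1
    rw [card_sdiff_of_subset hS, nsmul_one, Nat.cast_sub (card_le_card hS)] at this
    exact this
  have hσ_sum : ∑ i ∈ s, b i - d * #S ≤ ∑ t ∈ s \ S, b t := by
    have := card_nsmul_le_sum S (fun i => -b i) (-d) fun i hi => neg_le_neg (hb i (hS hi)).2
    rw [sum_sdiff_eq_sub hS]
    simp only [sum_neg_distrib, nsmul_eq_mul] at this
    linarith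
  -- `#s = (#s - #S) + #S`, and the two lower bounds for `σ` absorb one summand each
  have hS0 : (0 : ℝ) ≤ #s - #S := sub_nonneg.2 (by exact_mod_cast card_le_card hS)
  nlinarith [mul_nonneg hS0 (sub_nonneg.2 hσ_sum), mul_nonneg (Nat.cast_nonneg (α := ℝ) #S)
    (sub_nonneg.2 hσ_card)]

theorem one_sub_div_mul_one_sub_div_mul_le_sum_sdiff {s S : Finset ι} (hS : S ⊆ s) {b : ι → ℝ}
    {d : ℝ} (hb : ∀ i ∈ s, 1 ≤ b i ∧ b i ≤ d) (hs : s.Nonempty) {A : ℝ} (hSA : #S ≤ A)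
    (hAs : A ≤ #s) (hdA : (d - 1) * A ≤ ∑ i ∈ s, b i) :
    (1 - A / #s) * (1 - (d - 1) * A / ∑ i ∈ s, b i) * (∑ i ∈ s, b i - #S) ≤
      ∑ t ∈ s \ S, b t := by
  obtain ⟨j, hj⟩ := hs
  have hd : 0 ≤ d - 1 := sub_nonneg.2 ((hb j hj).1.trans (hb j hj).2)
  have hn : (0 : ℝ) < #s := by exact_mod_cast card_pos.2 ⟨j, hj⟩
  have hnT : (#s : ℝ) ≤ ∑ i ∈ s, b i := by
    simpa using card_nsmul_le_sum s b 1 fun i hi => (hb i hi).1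
  have hT : 0 < ∑ i ∈ s, b i := hn.trans_le hnT
  rw [one_sub_div hn.ne', one_sub_div hT.ne', div_mul_div_comm, div_mul_eq_mul_div,
    div_le_iff₀ (mul_pos hn hT)]
  calc (#s - A) * (∑ i ∈ s, b i - (d - 1) * A) * (∑ i ∈ s, b i - #S)
      ≤ (#s - #S) * (∑ i ∈ s, b i - (d - 1) * #S) * ∑ i ∈ s, b i := by
        have hk : (0 : ℝ) ≤ #S := Nat.cast_nonneg _
        have hdk : (d - 1) * #S ≤ (d - 1) * A := mul_le_mul_of_nonneg_left hSA hd
        exact mul_le_mul (mul_le_mul (by linarith) (by linarith) (by linarith) (by linarith))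
          (by linarith) (by linarith) (mul_nonneg (by linarith) (by linarith))
    _ ≤ #s * (∑ t ∈ s \ S, b t) * ∑ i ∈ s, b i :=
        mul_le_mul_of_nonneg_right (card_sub_mul_sum_sub_le_card_mul_sum_sdiff hS hb) hT.le
    _ = (∑ t ∈ s \ S, b t) * (#s * ∑ i ∈ s, b i) := by ring

end

theorem one_sub_mul_sub_mul_le_pow_mul_pow {R : Type*} [CommRing R] [LinearOrder R]
    [IsStrictOrderedRing R] {x y : R} (hx₀ : 0 ≤ x) (hx₁ : x ≤ 1) (hy₀ : 0 ≤ y) (hy₁ : y ≤ 1)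
    (m : ℕ) : 1 - m * x - m * y ≤ (1 - x) ^ m * (1 - y) ^ m := by
  have hxy : 0 ≤ (1 - x) * (1 - y) := mul_nonneg (sub_nonneg.2 hx₁) (sub_nonneg.2 hy₁)
  have hbernoulli := one_add_mul_le_pow (a := (1 - x) * (1 - y) - 1) (by linarith) m
  rw [add_sub_cancel] at hbernoulli
  rw [← mul_pow]
  refine le_trans ?_ hbernoulli
  nlinarith [mul_nonneg (mul_nonneg (Nat.cast_nonneg (α := R) m) hx₀) hy₀]

/-- Probability that `A` edges attached uniformly at random to `T = Σ b_s` stubs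
hit `A` distinct nodes: the ratio of the `A`-th elementary symmetric polynomial
of the `b_s` to `C(T,A)` is at least
`(1 - A/n)^A · (1 - (d-1)A/(b̄n))^A ≥ 1 - A²/n - A²(d-1)/(b̄n)`. -/
theorem stmt7 {n A d : ℕ} (hA : 0 < A) (hAn : A ≤ n) (hd : 1 ≤ d)
    (b : Fin n → ℕ) (hb : ∀ s, 1 ≤ b s ∧ b s ≤ d)
    (T : ℕ) (hT : T = ∑ s, b s) (hAT : A ≤ T)
    (bbar : ℝ) (hbbar : bbar = ((T : ℝ)) / n)
    (hcond : ((d : ℝ) - 1) * A / n ≤ bbar) :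
    (1 - (A : ℝ) / n) ^ A * (1 - ((d : ℝ) - 1) * A / (bbar * n)) ^ A ≤
        (∑ S ∈ Finset.powersetCard A (Finset.univ : Finset (Fin n)),
          ∏ s ∈ S, (b s : ℝ)) / (T.choose A : ℝ) ∧
      1 - (A : ℝ) ^ 2 / n - (A : ℝ) ^ 2 * ((d : ℝ) - 1) / (bbar * n) ≤
        (1 - (A : ℝ) / n) ^ A * (1 - ((d : ℝ) - 1) * A / (bbar * n)) ^ A := by
  have hn : (0 : ℝ) < n := by exact_mod_cast hA.trans_le hAn
  have hTpos : (0 : ℝ) < T := by exact_mod_cast hA.trans_le hAT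
  have hTsum : (T : ℝ) = ∑ s, (b s : ℝ) := by rw [hT]; push_cast; rfl
  have hbbar_n : bbar * n = T := by rw [hbbar, div_mul_cancel₀ _ hn.ne']
  have hdA : ((d : ℝ) - 1) * A ≤ T := by
    rwa [hbbar, div_le_div_iff_of_pos_right hn] at hcond
  have hx₁ : (A : ℝ) / n ≤ 1 := div_le_one_of_le₀ (by exact_mod_cast hAn) hn.le
  have hy₀ : 0 ≤ ((d : ℝ) - 1) * A / T := by
    have : (1 : ℝ) ≤ d := by exact_mod_cast hd
    have : (0 : ℝ) ≤ d - 1 := by linarith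
    positivity
  have hy₁ : ((d : ℝ) - 1) * A / T ≤ 1 := div_le_one_of_le₀ hdA hTpos.le
  rw [hbbar_n]
  constructor
  · rw [← mul_pow, le_div_iff₀ (by exact_mod_cast Nat.choose_pos hAT)]
    refine pow_mul_choose_le_sum_powersetCard_prod univ (fun s => Nat.cast_nonneg (b s))
      (mul_nonneg (sub_nonneg.2 hx₁) (sub_nonneg.2 hy₁)) hAT fun k hk S hS => ?_
    have hSk := (mem_powersetCard.1 hS).2
    have := one_sub_div_mul_one_sub_div_mul_le_sum_sdiff (subset_univ S)
      (b := fun s => (b s : ℝ)) (d := d) (fun s _ => by exact_mod_cast hb s)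
      ⟨⟨0, by exact_mod_cast hn⟩, mem_univ _⟩ (A := A)
      (by rw [hSk]; exact_mod_cast hk.le) (by simpa using hAn) (by rwa [← hTsum])
    simpa only [card_univ, Fintype.card_fin, hSk, ← hTsum] using this
  · have hsq : 1 - (A : ℝ) ^ 2 / n - (A : ℝ) ^ 2 * ((d : ℝ) - 1) / T =
        1 - A * (A / n) - A * (((d : ℝ) - 1) * A / T) := by
      field_simp
    rw [hsq]
    exact one_sub_mul_sub_mul_le_pow_mul_pow (by positivity) hx₁ hy₀ hy₁ A
end
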